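/- Assume the nozzle geometry and the 2D CGO function, with s·ε ≤ 1, and let [T₁, T₂] ⊆ [0, T] with T₂ − T₁ = ε². Let α₁, α₄ ∈ (0, 1) and C₁, C₄ > 0. Let H : ℂ → ℂ satisfy |H(z) − H(z′)| ≤ C₁|z − z′|^{α₁} for all z, z′; let u, v : D̄_ε × [T₁, T₂] → ℂ satisfy |u(x,t) − u(x₀,t₀)| ≤ C₄(‖x − x₀‖ + |t − t₀|^{1/2}) and |v(x,t) − v(x₀,t₀)| ≤ C₄(‖x − x₀‖ + |t − t₀|^{1/2}) for all pairs of points; and suppose u((0,0), t₀) = v((0,0), t₀) for some t₀ ∈ [T₁, T₂]. Write w = u − v. Then there exists a constant C > 0 depending only on μ, λ, T, C₁, C₄ such that |λ·∫_{T₁}^{T₂}∫_{D_ε} ( w(x,t) − (H(u(x,t)) − H(v(x,t))) )·u₀(x,t) dx dt| ≤ C·ε^{2+l+α₁α₄ l₀}. -/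

import Mathlib

noncomputable section

/-- Partial derivative in the first spatial variable. -/
def pd1 (f : ℝ → ℝ → ℝ → ℂ) (x₁ x₂ t : ℝ) : ℂ := deriv (fun y => f y x₂ t) x₁

/-- Partial derivative in the second spatial variable. -/
def pd2 (f : ℝ → ℝ → ℝ → ℂ) (x₁ x₂ t : ℝ) : ℂ := deriv (fun y => f x₁ y t) x₂

/-- Partial derivative in time. -/
def pdt (f : ℝ → ℝ → ℝ → ℂ) (x₁ x₂ t : ℝ) : ℂ := deriv (fun τ => f x₁ x₂ τ) t

/-- Spatial Laplacian `Δ = ∂₁² + ∂₂²`. -/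
def lap (f : ℝ → ℝ → ℝ → ℂ) (x₁ x₂ t : ℝ) : ℂ :=
  pd1 (pd1 f) x₁ x₂ t + pd2 (pd2 f) x₁ x₂ t

/-- The 2D complex geometric optics function
`u₀(x,t) = exp(μ^{-1/2}((s d₁ + i√(s²+λ) d₂) x₁ + (s d₂ − i√(s²+λ) d₁) x₂) + λ t)`. -/
def cgo2 (μ lam s d₁ d₂ : ℝ) (x₁ x₂ t : ℝ) : ℂ :=
  Complex.exp (((Real.sqrt μ : ℝ) : ℂ)⁻¹ *
      (((s : ℂ) * (d₁ : ℂ) + Complex.I * ((Real.sqrt (s ^ 2 + lam) : ℝ) : ℂ) * (d₂ : ℂ)) *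
          (x₁ : ℂ) +
        ((s : ℂ) * (d₂ : ℂ) - Complex.I * ((Real.sqrt (s ^ 2 + lam) : ℝ) : ℂ) * (d₁ : ℂ)) *
          (x₂ : ℂ)) +
    (lam : ℂ) * (t : ℂ))

/-- The parabolic distance `ρ = ‖x − y‖ + |t − τ|^{1/2}` in two space dimensions. -/
def prho (x₁ x₂ t y₁ y₂ τ : ℝ) : ℝ :=
  Real.sqrt ((x₁ - y₁) ^ 2 + (x₂ - y₂) ^ 2) + Real.sqrt |t - τ|

/-- Euclidean norm of the spatial gradient of `w`. -/
def gradNorm (w : ℝ → ℝ → ℝ → ℂ) (x₁ x₂ t : ℝ) : ℝ :=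
  Real.sqrt (‖pd1 w x₁ x₂ t‖ ^ 2 + ‖pd2 w x₁ x₂ t‖ ^ 2)

/-- The closed nozzle space–time cylinder
`D̄_ε × [T₁,T₂]`, `D_ε = {0 ≤ x₁ ≤ ε^l, γ(x₁) ≤ x₂ ≤ γ(x₁)+ε}`. -/
def nozzleCyl (ε l T₁ T₂ : ℝ) (γ : ℝ → ℝ) : Set (ℝ × ℝ × ℝ) :=
  {p : ℝ × ℝ × ℝ | p.1 ∈ Set.Icc 0 (ε ^ l) ∧ p.2.1 ∈ Set.Icc (γ p.1) (γ p.1 + ε) ∧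
    p.2.2 ∈ Set.Icc T₁ T₂}

/-- Parabolic `C^{1,α}` bound with constant `C` on the set `S`. -/
structure ParabolicC1 (w : ℝ → ℝ → ℝ → ℂ) (S : Set (ℝ × ℝ × ℝ)) (C α : ℝ) : Prop where
  bdd : ∀ p ∈ S, ‖w p.1 p.2.1 p.2.2‖ ≤ C
  grad_bdd : ∀ p ∈ S, gradNorm w p.1 p.2.1 p.2.2 ≤ C
  time_bdd : ∀ p ∈ S, ‖pdt w p.1 p.2.1 p.2.2‖ ≤ C
  lip : ∀ p ∈ S, ∀ q ∈ S,
    ‖w p.1 p.2.1 p.2.2 - w q.1 q.2.1 q.2.2‖ ≤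
      C * prho p.1 p.2.1 p.2.2 q.1 q.2.1 q.2.2
  grad_holder : ∀ p ∈ S, ∀ q ∈ S,
    Real.sqrt (‖pd1 w p.1 p.2.1 p.2.2 - pd1 w q.1 q.2.1 q.2.2‖ ^ 2 +
        ‖pd2 w p.1 p.2.1 p.2.2 - pd2 w q.1 q.2.1 q.2.2‖ ^ 2) ≤
      C * prho p.1 p.2.1 p.2.2 q.1 q.2.1 q.2.2 ^ α
  taylor : ∀ p ∈ S, ∀ q ∈ S,
    ‖w p.1 p.2.1 p.2.2 - w q.1 q.2.1 q.2.2
        - pd1 w q.1 q.2.1 q.2.2 * ((p.1 - q.1 : ℝ) : ℂ)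
        - pd2 w q.1 q.2.1 q.2.2 * ((p.2.1 - q.2.1 : ℝ) : ℂ)
        - pdt w q.1 q.2.1 q.2.2 * ((p.2.2 - q.2.2 : ℝ) : ℂ)‖ ≤
      C * prho p.1 p.2.1 p.2.2 q.1 q.2.1 q.2.2 ^ (1 + α)

/-- `w` is (jointly) continuously differentiable in `(x,t)` on the set `S`. -/
structure SmoothC1 (w : ℝ → ℝ → ℝ → ℂ) (S : Set (ℝ × ℝ × ℝ)) : Prop where
  cont : ContinuousOn (fun p : ℝ × ℝ × ℝ => w p.1 p.2.1 p.2.2) S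
  jdiff : ∀ p ∈ S, DifferentiableAt ℝ (fun q : ℝ × ℝ × ℝ => w q.1 q.2.1 q.2.2) p
  cont1 : ContinuousOn (fun p : ℝ × ℝ × ℝ => pd1 w p.1 p.2.1 p.2.2) S
  cont2 : ContinuousOn (fun p : ℝ × ℝ × ℝ => pd2 w p.1 p.2.1 p.2.2) S
  contt : ContinuousOn (fun p : ℝ × ℝ × ℝ => pdt w p.1 p.2.1 p.2.2) S

/-! Since `u = v` at the base point and both are parabolically `C₄`-Lipschitz, `|w| ≤ 2C₄ρ`,
and on the cylinder `ρ ≤ 4ε^{l₀}`; Hölder continuity of `H` then makes the first factor of the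
integrand `O(ε^{α₁α₄l₀})`, where `(8C₄)^{α₁} ≤ 1 + 8C₄` keeps the constant independent of `α₁`.
The CGO weight is at most `exp(2/√μ + λT)`, because `d₁x₁ ≤ 0` and `s|x₂| ≤ 2sε ≤ 2`. The
cylinder has volume `ε^{2+l+1}`, and the spare factor `ε ≤ 1` is discarded. -/

open Set intervalIntegral

lemma rpow_le_one_add_self {x α : ℝ} (hx : 0 ≤ x) (hα₀ : 0 ≤ α) (hα₁ : α ≤ 1) :
    x ^ α ≤ 1 + x := by
  rcases le_total x 1 with h | h
  · linarith [Real.rpow_le_one hx h hα₀]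
  · linarith [Real.rpow_le_self_of_one_le h hα₁]

lemma mul_rpow_le_one_add_mul {c ε e α κ : ℝ} (hc : 0 ≤ c) (hε₀ : 0 < ε) (hε₁ : ε ≤ 1)
    (hα₀ : 0 ≤ α) (hα₁ : α ≤ 1) (hκ : κ ≤ e * α) :
    (c * ε ^ e) ^ α ≤ (1 + c) * ε ^ κ := by
  rw [Real.mul_rpow hc (by positivity), ← Real.rpow_mul hε₀.le]
  exact mul_le_mul (rpow_le_one_add_self hc hα₀ hα₁)
    (Real.rpow_le_rpow_of_exponent_ge hε₀ hε₁ hκ) (by positivity) (by positivity)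

lemma norm_sub_sub_holder_sub_le {H : ℂ → ℂ} {C α c ε e κ : ℝ} {z z' : ℂ}
    (hH : ∀ z z', ‖H z - H z'‖ ≤ C * ‖z - z'‖ ^ α) (hC : 0 ≤ C) (hc : 0 ≤ c)
    (hε₀ : 0 < ε) (hε₁ : ε ≤ 1) (hα₀ : 0 ≤ α) (hα₁ : α ≤ 1) (he : 0 ≤ e) (hκ : κ ≤ e * α)
    (hzz' : ‖z - z'‖ ≤ c * ε ^ e) :
    ‖(z - z') - (H z - H z')‖ ≤ (c + C * (1 + c)) * ε ^ κ :=
  calc ‖(z - z') - (H z - H z')‖ ≤ c * ε ^ e + C * (c * ε ^ e) ^ α :=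
        (norm_sub_le _ _).trans (add_le_add hzz' ((hH z z').trans (by gcongr)))
    _ ≤ c * ε ^ κ + C * ((1 + c) * ε ^ κ) := by
        gcongr c * ?_ + C * ?_
        · exact Real.rpow_le_rpow_of_exponent_ge hε₀ hε₁
            (hκ.trans (mul_le_of_le_one_right he hα₁))
        · exact mul_rpow_le_one_add_mul hc hε₀ hε₁ hα₀ hα₁ hκ
    _ = (c + C * (1 + c)) * ε ^ κ := by ring

lemma norm_intervalIntegral_le_of_forall_Ioc {E : Type*} [NormedAddCommGroup E]
    [NormedSpace ℝ E] {f : ℝ → E} {a b C : ℝ} (hab : a ≤ b)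
    (hf : ∀ x ∈ Ioc a b, ‖f x‖ ≤ C) : ‖∫ x in a..b, f x‖ ≤ C * (b - a) := by
  have h := norm_integral_le_of_norm_le_const (a := a) (b := b) (f := f)
    (fun x hx => hf x (by rwa [uIoc_of_le hab] at hx))
  rwa [abs_of_nonneg (sub_nonneg.2 hab)] at h

lemma norm_integral_nozzle_le {E : Type*} [NormedAddCommGroup E] [NormedSpace ℝ E]
    {f : ℝ → ℝ → ℝ → E} {γ : ℝ → ℝ} {a h T₁ T₂ B : ℝ} (ha : 0 ≤ a) (hh : 0 ≤ h)
    (hT : T₁ ≤ T₂)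
    (hf : ∀ x₁ ∈ Ioc 0 a, ∀ x₂ ∈ Ioc (γ x₁) (γ x₁ + h), ∀ t ∈ Ioc T₁ T₂, ‖f x₁ x₂ t‖ ≤ B) :
    ‖∫ t in T₁..T₂, ∫ x₁ in (0:ℝ)..a, ∫ x₂ in (γ x₁)..(γ x₁ + h), f x₁ x₂ t‖
      ≤ B * h * a * (T₂ - T₁) := by
  refine norm_intervalIntegral_le_of_forall_Ioc (C := B * h * a) hT fun t ht => ?_
  refine (norm_intervalIntegral_le_of_forall_Ioc (C := B * h) ha fun x₁ hx₁ => ?_).trans_eq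
    (by ring)
  refine (norm_intervalIntegral_le_of_forall_Ioc (C := B) (by linarith) fun x₂ hx₂ => ?_).trans_eq
    (by ring)
  exact hf x₁ hx₁ x₂ hx₂ t ht

lemma norm_cgo2 (μ lam s d₁ d₂ x₁ x₂ t : ℝ) :
    ‖cgo2 μ lam s d₁ d₂ x₁ x₂ t‖
      = Real.exp ((√μ)⁻¹ * (s * d₁ * x₁ + s * d₂ * x₂) + lam * t) := by
  rw [cgo2, Complex.norm_exp]
  congr 1
  simp [Complex.mul_re]

lemma norm_cgo2_le {μ lam s d₁ d₂ x₁ x₂ t R T : ℝ} (hlam : 0 ≤ lam) (hs : 0 ≤ s)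
    (hd₁ : d₁ ≤ 0) (hd : d₁ ^ 2 + d₂ ^ 2 = 1) (hx₁ : 0 ≤ x₁) (hx₂ : s * |x₂| ≤ R)
    (ht : t ≤ T) :
    ‖cgo2 μ lam s d₁ d₂ x₁ x₂ t‖ ≤ Real.exp ((√μ)⁻¹ * R + lam * T) := by
  have hd₂ : |d₂| ≤ 1 := (sq_le_one_iff_abs_le_one d₂).1 (by nlinarith)
  have hx₁_term : s * d₁ * x₁ ≤ 0 :=
    mul_nonpos_of_nonpos_of_nonneg (mul_nonpos_of_nonneg_of_nonpos hs hd₁) hx₁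
  have hx₂_term : s * d₂ * x₂ ≤ R :=
    calc s * d₂ * x₂ ≤ s * (|d₂| * |x₂|) := by
          rw [mul_assoc, ← abs_mul]; exact mul_le_mul_of_nonneg_left (le_abs_self _) hs
      _ ≤ s * |x₂| := by gcongr; exact mul_le_of_le_one_left (abs_nonneg _) hd₂
      _ ≤ R := hx₂
  rw [norm_cgo2]
  gcongr
  linarith

lemma prho_le_abs_add (x₁ x₂ t y₁ y₂ τ : ℝ) :
    prho x₁ x₂ t y₁ y₂ τ ≤ |x₁ - y₁| + |x₂ - y₂| + √|t - τ| := by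
  rw [prho]
  gcongr
  rw [Real.sqrt_le_left (by positivity)]
  nlinarith [sq_abs (x₁ - y₁), sq_abs (x₂ - y₂), abs_nonneg (x₁ - y₁), abs_nonneg (x₂ - y₂)]

lemma norm_sub_le_two_mul_prho_of_eq {u v : ℝ → ℝ → ℝ → ℂ} {S : Set (ℝ × ℝ × ℝ)} {C : ℝ}
    (hu : ∀ p ∈ S, ∀ q ∈ S, ‖u p.1 p.2.1 p.2.2 - u q.1 q.2.1 q.2.2‖
      ≤ C * prho p.1 p.2.1 p.2.2 q.1 q.2.1 q.2.2)
    (hv : ∀ p ∈ S, ∀ q ∈ S, ‖v p.1 p.2.1 p.2.2 - v q.1 q.2.1 q.2.2‖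
      ≤ C * prho p.1 p.2.1 p.2.2 q.1 q.2.1 q.2.2)
    {p q : ℝ × ℝ × ℝ} (hp : p ∈ S) (hq : q ∈ S)
    (huv : u q.1 q.2.1 q.2.2 = v q.1 q.2.1 q.2.2) :
    ‖u p.1 p.2.1 p.2.2 - v p.1 p.2.1 p.2.2‖ ≤ 2 * C * prho p.1 p.2.1 p.2.2 q.1 q.2.1 q.2.2 :=
  calc ‖u p.1 p.2.1 p.2.2 - v p.1 p.2.1 p.2.2‖
      = ‖(u p.1 p.2.1 p.2.2 - u q.1 q.2.1 q.2.2) - (v p.1 p.2.1 p.2.2 - v q.1 q.2.1 q.2.2)‖ := by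
        rw [huv, sub_sub_sub_cancel_right]
    _ ≤ _ := norm_sub_le_of_le (hu p hp q hq) (hv p hp q hq)
    _ = _ := by ring

lemma abs_le_of_mem_nozzleCyl {ε l T₁ T₂ : ℝ} {γ : ℝ → ℝ}
    (hγ : ∀ x ∈ Icc (0:ℝ) (ε ^ l), |γ x| ≤ ε) {p : ℝ × ℝ × ℝ}
    (hp : p ∈ nozzleCyl ε l T₁ T₂ γ) : |p.2.1| ≤ 2 * ε := by
  obtain ⟨hx₁, ⟨hx₂₀, hx₂⟩, -⟩ := hp
  have hγx := abs_le.1 (hγ p.1 hx₁)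
  exact abs_le.2 ⟨by linarith, by linarith⟩

lemma prho_le_of_mem_nozzleCyl {ε l T₁ T₂ t₀ : ℝ} {γ : ℝ → ℝ} (hε₀ : 0 < ε) (hε₁ : ε ≤ 1)
    (hγ : ∀ x ∈ Icc (0:ℝ) (ε ^ l), |γ x| ≤ ε) (hT : T₂ - T₁ = ε ^ 2)
    (ht₀ : t₀ ∈ Icc T₁ T₂) {p : ℝ × ℝ × ℝ} (hp : p ∈ nozzleCyl ε l T₁ T₂ γ) :
    prho p.1 p.2.1 p.2.2 0 0 t₀ ≤ 4 * ε ^ min l 1 := by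
  have hx₂_abs := abs_le_of_mem_nozzleCyl hγ hp
  obtain ⟨⟨hx₁₀, hx₁⟩, -, ⟨ht₁, ht₂⟩⟩ := hp
  have hεl : ε ^ l ≤ ε ^ min l 1 :=
    Real.rpow_le_rpow_of_exponent_ge hε₀ hε₁ (min_le_left _ _)
  have hε : ε ≤ ε ^ min l 1 := by
    simpa using Real.rpow_le_rpow_of_exponent_ge hε₀ hε₁ (min_le_right l 1)
  have ht : √|p.2.2 - t₀| ≤ ε := by
    rw [Real.sqrt_le_left hε₀.le]
    exact abs_le.2 ⟨by linarith [ht₀.2], by linarith [ht₀.1]⟩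
  have := prho_le_abs_add p.1 p.2.1 p.2.2 0 0 t₀
  rw [sub_zero, sub_zero, abs_of_nonneg hx₁₀] at this
  linarith

theorem estimate_I6_general
    (μ lam T C₁ C₄ : ℝ) (hlam : 0 < lam)
    (hC₁ : 0 < C₁) (hC₄ : 0 < C₄) :
    ∃ C > 0, ∀ (ε l s d₁ d₂ T₁ T₂ α₁ α₄ t₀ : ℝ) (γ : ℝ → ℝ)
      (H : ℂ → ℂ) (u v w : ℝ → ℝ → ℝ → ℂ),
      ε ∈ Set.Ioo (0:ℝ) 1 → 0 < l →
      ContDiffOn ℝ 2 γ (Set.Icc 0 (ε ^ l)) → γ 0 = 0 →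
      derivWithin γ (Set.Icc 0 (ε ^ l)) 0 = 0 →
      (∀ x ∈ Set.Icc (0:ℝ) (ε ^ l), |γ x| ≤ ε) →
      d₁ < 0 → d₂ < 0 → d₁ ^ 2 + d₂ ^ 2 = 1 →
      0 < s → s * ε ≤ 1 →
      0 ≤ T₁ → T₂ ≤ T → T₂ - T₁ = ε ^ 2 →
      α₁ ∈ Set.Ioo (0:ℝ) 1 → α₄ ∈ Set.Ioo (0:ℝ) 1 → t₀ ∈ Set.Icc T₁ T₂ →
      (∀ z z', ‖H z - H z'‖ ≤ C₁ * ‖z - z'‖ ^ α₁) →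
      (∀ p ∈ nozzleCyl ε l T₁ T₂ γ, ∀ q ∈ nozzleCyl ε l T₁ T₂ γ,
        ‖u p.1 p.2.1 p.2.2 - u q.1 q.2.1 q.2.2‖
          ≤ C₄ * prho p.1 p.2.1 p.2.2 q.1 q.2.1 q.2.2) →
      (∀ p ∈ nozzleCyl ε l T₁ T₂ γ, ∀ q ∈ nozzleCyl ε l T₁ T₂ γ,
        ‖v p.1 p.2.1 p.2.2 - v q.1 q.2.1 q.2.2‖
          ≤ C₄ * prho p.1 p.2.1 p.2.2 q.1 q.2.1 q.2.2) →
      u 0 0 t₀ = v 0 0 t₀ →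
      (∀ x₁ x₂ t, w x₁ x₂ t = u x₁ x₂ t - v x₁ x₂ t) →
      ‖
          (lam : ℂ) * ∫ t in T₁..T₂, ∫ x₁ in (0:ℝ)..(ε ^ l), ∫ x₂ in (γ x₁)..(γ x₁ + ε),
            ((w x₁ x₂ t - (H (u x₁ x₂ t) - H (v x₁ x₂ t))) * cgo2 μ lam s d₁ d₂ x₁ x₂ t)‖
        ≤ C * ε ^ (2 + l + α₁ * α₄ * min l 1) := by
  set K := 8 * C₄ + C₁ * (1 + 8 * C₄)
  set M := Real.exp ((√μ)⁻¹ * 2 + lam * T)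
  refine ⟨lam * K * M, by positivity, ?_⟩
  intro ε l s d₁ d₂ T₁ T₂ α₁ α₄ t₀ γ H u v w ⟨hε₀, hε₁⟩ hl _ hγ0 _ hγ hd₁ _ hd hs hsε _ hT₂
    hTlen hα₁ hα₄ ht₀ hH hu hv huv hw
  set κ := α₁ * α₄ * min l 1
  have hl₀ : 0 ≤ min l 1 := le_min hl.le zero_le_one
  have hκ : κ ≤ min l 1 * α₁ := by
    nlinarith [mul_nonneg (mul_nonneg hα₁.1.le hl₀) (sub_nonneg.2 hα₄.2.le)]
  have hbase : ((0:ℝ), (0:ℝ), t₀) ∈ nozzleCyl ε l T₁ T₂ γ :=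
    ⟨⟨le_rfl, by positivity⟩, by simp [hγ0, hε₀.le], ht₀⟩
  have hintegrand : ∀ x₁ ∈ Ioc 0 (ε ^ l), ∀ x₂ ∈ Ioc (γ x₁) (γ x₁ + ε), ∀ t ∈ Ioc T₁ T₂,
      ‖(w x₁ x₂ t - (H (u x₁ x₂ t) - H (v x₁ x₂ t))) * cgo2 μ lam s d₁ d₂ x₁ x₂ t‖
        ≤ K * ε ^ κ * M := by
    intro x₁ hx₁ x₂ hx₂ t ht
    have hp : (x₁, x₂, t) ∈ nozzleCyl ε l T₁ T₂ γ :=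
      ⟨Ioc_subset_Icc_self hx₁, Ioc_subset_Icc_self hx₂, Ioc_subset_Icc_self ht⟩
    have huv_le : ‖u x₁ x₂ t - v x₁ x₂ t‖ ≤ 8 * C₄ * ε ^ min l 1 :=
      (norm_sub_le_two_mul_prho_of_eq hu hv hp hbase huv).trans (by
        nlinarith [prho_le_of_mem_nozzleCyl hε₀ hε₁.le hγ hTlen ht₀ hp])
    rw [norm_mul, hw]
    gcongr ?_ * ?_
    · exact norm_sub_sub_holder_sub_le hH hC₁.le (by positivity) hε₀ hε₁.le hα₁.1.le hα₁.2.le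
        hl₀ hκ huv_le
    · exact norm_cgo2_le hlam.le hs.le hd₁.le hd hx₁.1.le
        (by nlinarith [abs_le_of_mem_nozzleCyl hγ hp]) (ht.2.trans hT₂)
  have hT₁₂ : T₁ ≤ T₂ := by nlinarith
  rw [norm_mul, Complex.norm_real, Real.norm_of_nonneg hlam.le]
  calc lam * ‖_‖ ≤ lam * (K * ε ^ κ * M * ε * ε ^ l * (T₂ - T₁)) := by
        gcongr
        exact norm_integral_nozzle_le (by positivity) hε₀.le hT₁₂ hintegrand
    _ = lam * K * M * (ε ^ (2 + l + κ) * ε) := by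
        rw [hTlen, Real.rpow_add hε₀, Real.rpow_add hε₀, Real.rpow_two]
        ring
    _ ≤ lam * K * M * ε ^ (2 + l + κ) := by
        gcongr
        exact mul_le_of_le_one_right (by positivity) hε₁.le

/-- **Estimate for the term `I₆` (Lemma 3.8).**
If `H` is `α₁`-Hölder (constant `C₁`), `u, v` are parabolically Lipschitz (constant `C₄`)
on `D̄_ε × [T₁,T₂]` and `u = v` at the base point `((0,0), t₀)`, then with `w = u − v`,
`|λ ∫_{T₁}^{T₂} ∫_{D_ε} (w − (H(u) − H(v))) u₀ dx dt| ≤ C ε^{2+l+α₁α₄l₀}`,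
with `C` depending only on `μ, λ, T, C₁, C₄`. -/
theorem estimate_I6
    (μ lam T C₁ C₄ : ℝ) (hμ : 0 < μ) (hlam : 0 < lam) (hT : 0 < T)
    (hC₁ : 0 < C₁) (hC₄ : 0 < C₄) :
    ∃ C > 0, ∀ (ε l s d₁ d₂ T₁ T₂ α₁ α₄ t₀ : ℝ) (γ : ℝ → ℝ)
      (H : ℂ → ℂ) (u v w : ℝ → ℝ → ℝ → ℂ),
      ε ∈ Set.Ioo (0:ℝ) 1 → 0 < l →
      ContDiffOn ℝ 2 γ (Set.Icc 0 (ε ^ l)) → γ 0 = 0 →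
      derivWithin γ (Set.Icc 0 (ε ^ l)) 0 = 0 →
      (∀ x ∈ Set.Icc (0:ℝ) (ε ^ l), |γ x| ≤ ε) →
      d₁ < 0 → d₂ < 0 → d₁ ^ 2 + d₂ ^ 2 = 1 →
      0 < s → s * ε ≤ 1 →
      0 ≤ T₁ → T₂ ≤ T → T₂ - T₁ = ε ^ 2 →
      α₁ ∈ Set.Ioo (0:ℝ) 1 → α₄ ∈ Set.Ioo (0:ℝ) 1 → t₀ ∈ Set.Icc T₁ T₂ →
      (∀ z z', ‖H z - H z'‖ ≤ C₁ * ‖z - z'‖ ^ α₁) →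
      (∀ p ∈ nozzleCyl ε l T₁ T₂ γ, ∀ q ∈ nozzleCyl ε l T₁ T₂ γ,
        ‖u p.1 p.2.1 p.2.2 - u q.1 q.2.1 q.2.2‖
          ≤ C₄ * prho p.1 p.2.1 p.2.2 q.1 q.2.1 q.2.2) →
      (∀ p ∈ nozzleCyl ε l T₁ T₂ γ, ∀ q ∈ nozzleCyl ε l T₁ T₂ γ,
        ‖v p.1 p.2.1 p.2.2 - v q.1 q.2.1 q.2.2‖
          ≤ C₄ * prho p.1 p.2.1 p.2.2 q.1 q.2.1 q.2.2) →
      u 0 0 t₀ = v 0 0 t₀ →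
      (∀ x₁ x₂ t, w x₁ x₂ t = u x₁ x₂ t - v x₁ x₂ t) →
      ‖
          (lam : ℂ) * ∫ t in T₁..T₂, ∫ x₁ in (0:ℝ)..(ε ^ l), ∫ x₂ in (γ x₁)..(γ x₁ + ε),
            ((w x₁ x₂ t - (H (u x₁ x₂ t) - H (v x₁ x₂ t))) * cgo2 μ lam s d₁ d₂ x₁ x₂ t)‖
        ≤ C * ε ^ (2 + l + α₁ * α₄ * min l 1) :=
  estimate_I6_general μ lam T C₁ C₄ hlam hC₁ hC₄
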